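/- If ℓ = t(n−1) + 2 for a non-negative integer t, n ≥ 3, and T is a tree on n vertices with T ≠ K_{1,n−1}, then r(K_{1,ℓ}, T) = ℓ + n − 2. -/

import Mathlib

open SimpleGraph
open scoped Classical

/-- `H` embeds into `G`: there is an injective graph homomorphism from `H` to `G`. -/
def Copies {α : Type*} {β : Type*} (H : SimpleGraph α) (G : SimpleGraph β) : Prop :=
  ∃ f : α → β, Function.Injective f ∧ ∀ ⦃a b : α⦄, H.Adj a b → G.Adj (f a) (f b)

/-- the star `K_{1,ℓ}` with `ℓ` leaves and center `0`. -/
def starGraphK (ℓ : ℕ) : SimpleGraph (Fin (ℓ + 1)) :=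
  SimpleGraph.fromRel (fun a _ => a = 0)

/-- the graph of color `i` for a symmetric edge-coloring `c`. -/
def colorGraph {N k : ℕ} (c : Fin N → Fin N → Fin k) (i : Fin k) : SimpleGraph (Fin N) :=
  SimpleGraph.fromRel (fun a b => c a b = i)

/-- `K_N → (G₁, G₂)`: every red-blue coloring of `E(K_N)` yields a red `G₁` or a blue `G₂`. -/
def RamseyProp2 {α β : Type*} (N : ℕ) (G₁ : SimpleGraph α) (G₂ : SimpleGraph β) : Prop :=
  ∀ R : SimpleGraph (Fin N), Copies G₁ R ∨ Copies G₂ Rᶜ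

/-- the 2-color Ramsey number `r(G₁, G₂)`. -/
noncomputable def ramsey2 {α β : Type*} (G₁ : SimpleGraph α) (G₂ : SimpleGraph β) : ℕ :=
  sInf {N | RamseyProp2 N G₁ G₂}

/-- `K_N → (G₁, G₂, G₃)` for 3-colorings. -/
def RamseyProp3 {α β γ : Type*} (N : ℕ) (G₁ : SimpleGraph α) (G₂ : SimpleGraph β)
    (G₃ : SimpleGraph γ) : Prop :=
  ∀ c : Fin N → Fin N → Fin 3, (∀ a b, c a b = c b a) →
    Copies G₁ (colorGraph c 0) ∨ Copies G₂ (colorGraph c 1) ∨ Copies G₃ (colorGraph c 2)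

/-- the 3-color Ramsey number `r(G₁, G₂, G₃)`. -/
noncomputable def ramsey3 {α β γ : Type*} (G₁ : SimpleGraph α) (G₂ : SimpleGraph β)
    (G₃ : SimpleGraph γ) : ℕ :=
  sInf {N | RamseyProp3 N G₁ G₂ G₃}

/-- the chromatic number as a natural number. -/
noncomputable def chrom {β : Type*} (H : SimpleGraph β) : ℕ :=
  sInf {k | H.Colorable k}

/-- the surplus `s(H)`: the minimum size of a color class over proper colorings of `H`
with `chrom H` colors. -/
noncomputable def surplus {β : Type*} [Fintype β] (H : SimpleGraph β) : ℕ :=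
  sInf {s | ∃ C : H.Coloring (Fin (chrom H)), ∃ i : Fin (chrom H),
    s = (Finset.univ.filter (fun v => C v = i)).card}


/-!
Lower bound: on `(t + 1)(n - 1)` vertices, colour red the complete equipartite graph with `t + 1`
parts of size `n - 1`. Red degrees are `t(n - 1) < ℓ`, and every blue component has `n - 1 < n`
vertices, so the connected graph `T` has no blue copy.

Upper bound: on `N = ℓ + n - 2 = (t + 1)(n - 1) + 1` vertices with no red `K_{1,ℓ}`, every vertex
has blue degree at least `n - 2`. If the red graph is not complete multipartite, the blue graph
has an induced path `z a y`. Since `T` is not a star, it has a leaf `u` whose neighbour `v` starts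
a path `v p q`; embed `v p q` onto `z a y`, then the other vertices except `u` greedily in order
of distance from `v` (its parent is already placed, and at most `n - 3` other vertices are in
use), and finally `u` next to `z`, whose blue neighbourhood misses the used vertex `y`.
If the red graph is complete multipartite, its parts are blue cliques of size at least `n - 1`;
a part of size `n` contains `T`, and if all parts have size `n - 1` then `n - 1 ∣ N`, which is
impossible for `n ≥ 3`.
-/

open Finset

section Ramsey

variable {α β : Type*} {G₁ : SimpleGraph α} {G₂ : SimpleGraph β}

theorem copies_iff_isContained {H : SimpleGraph α} {G : SimpleGraph β} :
    Copies H G ↔ H ⊑ G :=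
  ⟨fun ⟨f, hf, hadj⟩ => ⟨⟨⟨f, fun h => hadj h⟩, hf⟩⟩,
    fun ⟨c⟩ => ⟨c, c.injective, fun _ _ h => c.toHom.map_adj h⟩⟩

theorem ramseyProp2_iff {N : ℕ} :
    RamseyProp2 N G₁ G₂ ↔ ∀ R : SimpleGraph (Fin N), G₁ ⊑ R ∨ G₂ ⊑ Rᶜ := by
  simp only [RamseyProp2, copies_iff_isContained]

theorem RamseyProp2.isContained_or_isContained_compl {N : ℕ} (h : RamseyProp2 N G₁ G₂)
    {W : Type*} [Fintype W] (hN : N ≤ Fintype.card W) (R : SimpleGraph W) :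
    G₁ ⊑ R ∨ G₂ ⊑ Rᶜ := by
  obtain ⟨e⟩ := Function.Embedding.nonempty_of_card_le (α := Fin N) (β := W) (by simpa using hN)
  have hcompl : (R.comap e)ᶜ ⊑ Rᶜ :=
    ⟨⟨⟨e, fun {_ _} h => ⟨e.injective.ne h.1, h.2⟩⟩, e.injective⟩⟩
  rcases ramseyProp2_iff.1 h (R.comap e) with h₁ | h₂
  · exact .inl (h₁.trans (Embedding.comap e R).isContained)
  · exact .inr (h₂.trans hcompl)

theorem RamseyProp2.mono {m M : ℕ} (h : RamseyProp2 m G₁ G₂) (hmM : m ≤ M) :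
    RamseyProp2 M G₁ G₂ :=
  ramseyProp2_iff.2 fun R => h.isContained_or_isContained_compl (by simpa using hmM) R

theorem ramsey2_eq_succ {N : ℕ} (hup : RamseyProp2 (N + 1) G₁ G₂)
    (hlow : ¬ RamseyProp2 N G₁ G₂) : ramsey2 G₁ G₂ = N + 1 :=
  le_antisymm (Nat.sInf_le hup) <| le_csInf ⟨_, hup⟩ fun _ hM => by
    by_contra! h
    exact hlow (hM.mono (by omega))

end Ramsey

theorem starGraphK_isContained_iff {W : Type*} [Fintype W] {R : SimpleGraph W}
    [DecidableRel R.Adj] {ℓ : ℕ} : starGraphK ℓ ⊑ R ↔ ∃ x, ℓ ≤ R.degree x := by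
  have hcenter : (starGraphK ℓ).degree 0 = ℓ := by
    have h := degree_starGraph_center (r := (0 : Fin (ℓ + 1)))
    simp only [Fintype.card_fin, add_tsub_cancel_right] at h
    convert h using 2
    rfl
  constructor
  · rintro ⟨f⟩
    exact ⟨f 0, hcenter.ge.trans (f.degree_le 0)⟩
  · rintro ⟨x, hx⟩
    obtain ⟨F, hFx, hF⟩ :=
      exists_subset_card_eq (hx.trans_eq (R.card_neighborFinset_eq_degree x).symm)
    set g : Fin ℓ → W := fun i => (F.equivFinOfCardEq hF).symm i
    have hxg : ∀ i, R.Adj x (g i) := fun i => (R.mem_neighborFinset x _).1 (hFx (Subtype.prop _))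
    refine ⟨⟨⟨Fin.cons x g, ?_⟩, Fin.cons_injective_iff.2 ⟨?_, ?_⟩⟩⟩
    · rintro a b ⟨hab, rfl | rfl⟩
      · cases b using Fin.cases with
        | zero => exact absurd rfl hab
        | succ i => simpa using hxg i
      · cases a using Fin.cases with
        | zero => exact absurd rfl hab
        | succ i => simpa using (hxg i).symm
    · rintro ⟨i, hi⟩
      exact (hxg i).ne hi.symm
    · exact fun i j h => (F.equivFinOfCardEq hF).symm.injective (Subtype.ext h)

namespace SimpleGraph

section Multipartite

variable {V W : Type*} {R : SimpleGraph W}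

theorem isContained_of_isClique [Fintype V] (T : SimpleGraph V) {s : Finset W}
    (hs : R.IsClique (s : Set W)) (hcard : Fintype.card V ≤ #s) : T ⊑ R := by
  have hT : T ⊑ R.induce (s : Set W) := by
    rw [induce_eq_top.2 hs]
    exact isContained_top_iff.2 (Function.Embedding.nonempty_of_card_le (by simpa using hcard))
  exact hT.trans ⟨Copy.induce R _⟩

variable [Fintype W]

theorem card_filter_not_adj (x : W) :
    #(univ.filter (¬ R.Adj x ·)) = Fintype.card W - R.degree x := by
  have h : univ.filter (¬ R.Adj x ·) = (R.neighborFinset x)ᶜ := by ext; simp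
  rw [h, card_compl, card_neighborFinset_eq_degree]

theorem IsCompleteMultipartite.isClique_compl_filter_not_adj (h : R.IsCompleteMultipartite)
    (x : W) : Rᶜ.IsClique (univ.filter (¬ R.Adj x ·) : Set W) := by
  intro y hy z hz hyz
  simp only [coe_filter, mem_univ, true_and, Set.mem_ofPred_eq] at hy hz
  exact ⟨hyz, h.trans _ _ _ (fun hyx => hy hyx.symm) hz⟩

theorem IsCompleteMultipartite.dvd_card (h : R.IsCompleteMultipartite) {m : ℕ}
    (hm : ∀ x, #(univ.filter (¬ R.Adj x ·)) = m) : m ∣ Fintype.card W := by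
  let s := h.setoid
  have hfiber : ∀ q : Quotient s, #(univ.filter (fun x => Quotient.mk s x = q)) = m := by
    intro q
    obtain ⟨x, rfl⟩ := Quotient.exists_rep q
    rw [← hm x]
    congr 1
    ext y
    simp only [mem_filter, mem_univ, true_and]
    rw [Quotient.eq, adj_comm]
    rfl
  rw [← card_univ, card_eq_sum_card_fiberwise (fun x _ => mem_univ (Quotient.mk s x))]
  simp [hfiber]

end Multipartite

section RootedTree

variable {V : Type*} {T : SimpleGraph V} {r x y y' p : V}

theorem Connected.exists_adj_dist_add_one_eq (hT : T.Connected) (hx : x ≠ r) :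
    ∃ y, T.Adj x y ∧ T.dist r y + 1 = T.dist r x := by
  obtain ⟨w, hw⟩ := hT.exists_walk_length_eq_dist x r
  cases w with
  | nil => exact absurd rfl hx
  | @cons _ y _ h q =>
    refine ⟨y, h, le_antisymm ?_ ?_⟩
    · have := dist_le q
      rw [Walk.length_cons] at hw
      rw [dist_comm, dist_comm (u := r)]
      omega
    · have := hT.dist_triangle (u := r) (v := y) (w := x)
      rwa [dist_comm (u := y), dist_eq_one_iff_adj.2 h] at this

theorem IsTree.eq_of_adj_of_dist_lt (hT : T.IsTree) (hy : T.Adj x y) (hy' : T.Adj x y')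
    (h : T.dist r y < T.dist r x) (h' : T.dist r y' < T.dist r x) : y = y' := by
  have hpath : ∀ z, T.Adj x z → T.dist r z < T.dist r x →
      ∃ q : T.Walk x r, q.IsPath ∧ q.snd = z := by
    intro z hz hlt
    obtain ⟨q, hq, hlen⟩ := hT.connected.exists_path_of_dist z r
    have hx : x ∉ q.support := fun hx => by
      have h₁ := dist_le (q.dropUntil x hx)
      have h₂ := q.length_dropUntil_le_length hx
      rw [dist_comm] at h₁ hlen
      omega
    exact ⟨.cons hz q, hq.cons hx, by simp⟩
  obtain ⟨q, hq, rfl⟩ := hpath y hy h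
  obtain ⟨q', hq', rfl⟩ := hpath y' hy' h'
  rw [show q = q' from congrArg Subtype.val
    ((hT.isAcyclic.subsingleton_path x r).elim ⟨q, hq⟩ ⟨q', hq'⟩)]

/-- In a tree, the ancestor-closed sets containing `r` are the vertex sets of subtrees through
`r`. -/
def AncestorClosed (T : SimpleGraph V) (r : V) (S : Finset V) : Prop :=
  ∀ ⦃x⦄, x ∈ S → ∀ ⦃y⦄, T.Adj x y → T.dist r y < T.dist r x → y ∈ S

variable {S : Finset V}

theorem ancestorClosed_singleton (r : V) : AncestorClosed T r {r} := by
  intro x hx y _ h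
  simp [Finset.mem_singleton.1 hx] at h

theorem AncestorClosed.insert (hS : AncestorClosed T r S) (hT : T.IsTree) (hxp : T.Adj x p)
    (hp : p ∈ S) (hpx : T.dist r p < T.dist r x) : AncestorClosed T r (insert x S) := by
  intro z hz y hzy hlt
  rcases mem_insert.1 hz with rfl | hz
  · rw [hT.eq_of_adj_of_dist_lt hzy hxp hlt hpx]
    exact mem_insert_of_mem hp
  · exact mem_insert_of_mem (hS hz hzy hlt)

theorem AncestorClosed.eq_of_adj (hS : AncestorClosed T r S) (hT : T.IsTree) (hx : x ∉ S)
    (hy : y ∈ S) (hxy : T.Adj x y) (hxp : T.Adj x p) (hpx : T.dist r p < T.dist r x) :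
    y = p := by
  rcases hT.dist_eq_dist_add_one_of_adj r hxy with h | h
  · exact hT.eq_of_adj_of_dist_lt hxy hxp (by omega) hpx
  · exact absurd (hS hy hxy.symm (by omega)) hx

end RootedTree

section PartialCopy

variable {V W : Type*} {T : SimpleGraph V} {B : SimpleGraph W}

def IsPartialCopy (T : SimpleGraph V) (B : SimpleGraph W) (S : Finset V) (f : V → W) : Prop :=
  Set.InjOn f S ∧ ∀ ⦃x⦄, x ∈ S → ∀ ⦃y⦄, y ∈ S → T.Adj x y → B.Adj (f x) (f y)

theorem IsPartialCopy.singleton (v : V) (z : W) : IsPartialCopy T B {v} fun _ => z :=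
  ⟨by simp, fun x hx y hy h => by simp_all⟩

theorem IsPartialCopy.insert {S : Finset V} {f : V → W} {x : V} {w : W}
    (hf : IsPartialCopy T B S f) (hx : x ∉ S) (hw : w ∉ S.image f)
    (hadj : ∀ y ∈ S, T.Adj x y → B.Adj w (f y)) :
    IsPartialCopy T B (insert x S) (Function.update f x w) := by
  have hfS : ∀ y ∈ S, Function.update f x w y = f y :=
    fun y hy => Function.update_of_ne (ne_of_mem_of_not_mem hy hx) _ _
  refine ⟨?_, ?_⟩
  · rw [coe_insert, Set.injOn_insert (by simpa using hx), Function.update_self,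
      Set.image_congr hfS]
    exact ⟨hf.1.congr fun y hy => (hfS y hy).symm, by simpa using hw⟩
  · intro a ha b hb hab
    rcases mem_insert.1 ha with rfl | ha' <;> rcases mem_insert.1 hb with rfl | hb'
    · exact absurd hab (T.loopless.irrefl _)
    · rw [Function.update_self, hfS b hb']
      exact hadj b hb' hab
    · rw [Function.update_self, hfS a ha']
      exact (hadj a ha' hab.symm).symm
    · rw [hfS a ha', hfS b hb']
      exact hf.2 ha' hb' hab

theorem IsPartialCopy.isContained [Fintype V] {f : V → W} (hf : IsPartialCopy T B univ f) :
    T ⊑ B :=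
  ⟨⟨⟨f, fun h => hf.2 (mem_univ _) (mem_univ _) h⟩,
    fun a b h => hf.1 (by simp) (by simp) h⟩⟩

theorem exists_adj_notMem_of_card_filter_lt [Fintype W] {w : W} (I : Finset W)
    (h : #(I.filter (B.Adj w)) < B.degree w) : ∃ w', B.Adj w w' ∧ w' ∉ I := by
  by_contra! hall
  refine (card_le_card fun w' hw' => ?_).not_gt
    (h.trans_eq (B.card_neighborFinset_eq_degree w).symm)
  rw [mem_neighborFinset] at hw'
  exact mem_filter.2 ⟨hall w' hw', hw'⟩

theorem IsPartialCopy.exists_extend [Fintype W] (hT : T.IsTree) {d : ℕ}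
    (hdeg : ∀ w, d ≤ B.degree w) {r : V} {S S' : Finset V} (hSS' : S ⊆ S') (hr : r ∈ S)
    (hS : AncestorClosed T r S) (hS' : AncestorClosed T r S') (hcard : #S' ≤ d + 1)
    {f : V → W} (hf : IsPartialCopy T B S f) :
    ∃ g, IsPartialCopy T B S' g ∧ ∀ x ∈ S, g x = f x := by
  obtain ⟨k, hk⟩ : ∃ k, #(S' \ S) = k := ⟨_, rfl⟩
  induction k generalizing S f with
  | zero =>
    obtain rfl : S = S' :=
      hSS'.antisymm (sdiff_eq_empty_iff_subset.1 (card_eq_zero.1 hk))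
    exact ⟨f, hf, fun _ _ => rfl⟩
  | succ k ih =>
    obtain ⟨x, hx, hmin⟩ := exists_min_image (S' \ S) (T.dist r) (card_pos.1 (by omega))
    rw [mem_sdiff] at hx
    obtain ⟨p, hxp, hpx⟩ :=
      hT.connected.exists_adj_dist_add_one_eq (ne_of_mem_of_not_mem hr hx.2).symm
    have hp : p ∈ S := by
      by_contra hp
      have := hmin p (mem_sdiff.2 ⟨hS' hx.1 hxp (by omega), hp⟩)
      omega
    have hfree : #((S.image f).filter (B.Adj (f p))) < B.degree (f p) := by
      have hsub : (S.image f).filter (B.Adj (f p)) ⊆ (S.image f).erase (f p) :=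
        fun z hz => mem_erase.2 ⟨(mem_filter.1 hz).2.ne', (mem_filter.1 hz).1⟩
      have hfilter := card_le_card hsub
      rw [card_erase_of_mem (mem_image_of_mem f hp)] at hfilter
      have hSS'card := card_lt_card (ssubset_of_subset_of_ne hSS' (by rintro rfl; simp_all))
      have := card_image_le (s := S) (f := f)
      have := card_pos.2 ⟨p, hp⟩
      have := hdeg (f p)
      omega
    obtain ⟨w, hw, hwS⟩ := exists_adj_notMem_of_card_filter_lt _ hfree
    obtain ⟨g, hg, hgf⟩ := ih (insert_subset hx.1 hSS') (mem_insert_of_mem hr)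
      (hS.insert hT hxp hp (by omega))
      (hf.insert hx.2 hwS fun y hy hxy => hS.eq_of_adj hT hx.2 hy hxy hxp (by omega) ▸ hw.symm)
      (by rw [sdiff_insert, card_erase_of_mem (mem_sdiff.2 hx), hk]; rfl)
    exact ⟨g, hg, fun y hy => (hgf y (mem_insert_of_mem hy)).trans
      (Function.update_of_ne (ne_of_mem_of_not_mem hy hx.2) _ _)⟩

end PartialCopy

section NonStarTree

variable {V W : Type*} {T : SimpleGraph V} {B : SimpleGraph W}

theorem IsTree.eq_starGraph_of_isUniversal (hT : T.IsTree) {c : V} (hc : T.IsUniversal c) :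
    T = starGraph c := by
  ext a b
  rw [starGraph_adj]
  refine ⟨fun h => ⟨h.ne, ?_⟩, ?_⟩
  · by_contra! hab
    exact hT.isAcyclic.cliqueFree le_rfl _
      (is3Clique_triple_iff.2 ⟨hc hab.1.symm, hc hab.2.symm, h⟩)
  · rintro ⟨hab, rfl | rfl⟩
    · exact hc hab
    · exact (hc hab.symm).symm

def Iso.starGraph (e : V ≃ W) (c : V) : starGraph c ≃g starGraph (e c) :=
  ⟨e, by simp [e.injective.ne_iff]⟩

theorem nonempty_iso_starGraphK {n : ℕ} (c : Fin n) :
    Nonempty (starGraph c ≃g starGraphK (n - 1)) := by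
  let e₀ : Fin n ≃ Fin (n - 1 + 1) := finCongr (by have := c.pos; omega)
  let e := e₀.trans (Equiv.swap (e₀ c) 0)
  have hec : e c = 0 := by simp [e]
  rw [show starGraphK (n - 1) = starGraph 0 from rfl, ← hec]
  exact ⟨Iso.starGraph e c⟩

variable [Fintype V]

theorem IsTree.exists_three_le_dist (hT : T.IsTree) (hno : ∀ c, ¬ T.IsUniversal c) :
    ∃ r x, 3 ≤ T.dist r x := by
  obtain ⟨c, -, hc⟩ := exists_max_image univ (fun v => T.degree v)
    (univ_nonempty_iff.2 hT.connected.nonempty)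
  obtain ⟨z, hcz, hcz'⟩ : ∃ z, c ≠ z ∧ ¬ T.Adj c z := by simpa [IsUniversal] using hno c
  by_cases h3 : 3 ≤ T.dist c z
  · exact ⟨c, z, h3⟩
  have h2 := hT.connected.one_lt_dist_of_ne_of_not_adj hcz hcz'
  obtain ⟨m, hzm, hm⟩ := hT.connected.exists_adj_dist_add_one_eq hcz.symm
  have hcm : T.Adj c m := dist_eq_one_iff_adj.1 (by omega)
  have hdeg : 1 < #(T.neighborFinset c) := by
    calc 1 < #{c, z} := by rw [card_pair hcz]; omega
      _ ≤ T.degree m := by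
        rw [← card_neighborFinset_eq_degree]
        refine card_le_card fun x hx => ?_
        rcases mem_insert.1 hx with rfl | hx
        · simpa using hcm.symm
        · simpa [mem_singleton.1 hx] using hzm.symm
      _ ≤ T.degree c := hc m (mem_univ m)
      _ = _ := (card_neighborFinset_eq_degree T c).symm
  obtain ⟨w, hw, hwm⟩ := exists_mem_ne hdeg m
  rw [mem_neighborFinset] at hw
  refine ⟨z, w, ?_⟩
  have hzm' : T.dist z m = 1 := dist_eq_one_iff_adj.2 hzm
  have hzc : T.dist z c = 2 := by rw [dist_comm]; omega
  rcases hT.dist_eq_dist_add_one_of_adj z hw with h | h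
  · exact absurd (hT.eq_of_adj_of_dist_lt hw hcm (r := z) (by omega) (by omega)) hwm
  · omega

theorem IsTree.exists_leaf_adj_path (hT : T.IsTree) (hno : ∀ c, ¬ T.IsUniversal c) :
    ∃ u v p q, T.Adj u v ∧ (∀ w, T.Adj u w → w = v) ∧ T.Adj v p ∧ T.Adj p q ∧
      T.dist v q = 2 := by
  obtain ⟨r, x, hx⟩ := hT.exists_three_le_dist hno
  obtain ⟨u, -, hu⟩ := exists_max_image univ (T.dist r) ⟨x, mem_univ x⟩
  have hu3 := hx.trans (hu x (mem_univ x))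
  have hne : ∀ y, 0 < T.dist r y → y ≠ r := by rintro y h rfl; simp at h
  obtain ⟨v, huv, hv⟩ := hT.connected.exists_adj_dist_add_one_eq (hne u (by omega))
  obtain ⟨p, hvp, hp⟩ := hT.connected.exists_adj_dist_add_one_eq (hne v (by omega))
  obtain ⟨q, hpq, hq⟩ := hT.connected.exists_adj_dist_add_one_eq (hne p (by omega))
  refine ⟨u, v, p, q, huv, fun w huw => ?_, hvp, hpq, ?_⟩
  · rcases hT.dist_eq_dist_add_one_of_adj r huw with h | h
    · exact hT.eq_of_adj_of_dist_lt huw huv (r := r) (by omega) (by omega)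
    · have := hu w (mem_univ w)
      omega
  · have hle := dist_le (Walk.cons hvp (Walk.cons hpq Walk.nil))
    have htri := hT.connected.dist_triangle (u := r) (v := q) (w := v)
    rw [dist_comm (u := q)] at htri
    simp only [Walk.length_cons, Walk.length_nil] at hle
    omega

end NonStarTree

section TreeEmbedding

variable {V W : Type*} [Fintype V] [Fintype W] {T : SimpleGraph V} {B : SimpleGraph W}

theorem IsPartialCopy.isContained_of_insert_leaf {u v x : V} {g : V → W}
    (hg : IsPartialCopy T B (univ.erase u) g) (hu : ∀ w, T.Adj u w → w = v) (huv : u ≠ v)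
    (hxu : x ≠ u) (hvx : ¬ B.Adj (g v) (g x)) (hvx' : g v ≠ g x)
    (hdeg : Fintype.card V - 2 ≤ B.degree (g v)) : T ⊑ B := by
  set I := (univ.erase u).image g
  have hvI : g v ∈ I := mem_image_of_mem g (by simpa using huv.symm)
  have hxI : g x ∈ I.erase (g v) :=
    mem_erase.2 ⟨hvx'.symm, mem_image_of_mem g (by simpa using hxu)⟩
  obtain ⟨w, hw, hwI⟩ := exists_adj_notMem_of_card_filter_lt I (w := g v) (B := B) (by
    have hsub : I.filter (B.Adj (g v)) ⊆ (I.erase (g v)).erase (g x) := fun y hy => by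
      rw [mem_filter] at hy
      exact mem_erase.2 ⟨fun h => hvx (h ▸ hy.2), mem_erase.2 ⟨hy.2.ne', hy.1⟩⟩
    have hI : #I ≤ Fintype.card V - 1 := card_image_le.trans (by simp)
    have h₁ := card_le_card hsub
    have h₂ := card_pos.2 ⟨_, hxI⟩
    rw [card_erase_of_mem hxI, card_erase_of_mem hvI] at h₁
    rw [card_erase_of_mem hvI] at h₂
    omega)
  have hfull := hg.insert (notMem_erase u univ) hwI fun y _ huy => by
    rw [hu y huy]
    exact hw.symm
  rw [insert_erase (mem_univ u)] at hfull
  exact hfull.isContained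

theorem IsTree.isContained_of_le_degree {u v p q : V} (hT : T.IsTree) (huv : T.Adj u v)
    (hu : ∀ w, T.Adj u w → w = v) (hvp : T.Adj v p) (hpq : T.Adj p q) (hvq : T.dist v q = 2)
    (hdeg : ∀ w, Fintype.card V - 2 ≤ B.degree w) {z a y : W} (hza : B.Adj z a)
    (hay : B.Adj a y) (hzy : ¬ B.Adj z y) (hzy' : z ≠ y) : T ⊑ B := by
  have hvq' : v ≠ q := by rintro rfl; simp at hvq
  have hqv : ¬ T.Adj q v := fun h => by rw [dist_comm, dist_eq_one_iff_adj.2 h] at hvq; simp at hvq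
  have hf₀ : IsPartialCopy T B {q, p, v}
      (Function.update (Function.update (fun _ => z) p a) q y) := by
    refine ((IsPartialCopy.singleton v z).insert ?_ ?_ ?_).insert ?_ ?_ ?_
    all_goals simp [Function.update_apply, hvp.ne, hvp.ne', hpq.ne', hvq'.symm, hza.ne', hay.ne',
      hzy'.symm, hza.symm, hay.symm, hqv]
  have hS₀ : AncestorClosed T v {q, p, v} :=
    ((ancestorClosed_singleton v).insert hT hvp.symm (mem_singleton_self v)
      (by simp [dist_eq_one_iff_adj.2 hvp])).insert hT hpq.symm (by simp)
      (by rw [hvq, dist_eq_one_iff_adj.2 hvp]; omega)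
  have hS' : AncestorClosed T v (univ.erase u) := by
    intro x _ y hxy hlt
    refine mem_erase.2 ⟨?_, mem_univ y⟩
    rintro rfl
    simp [hu x hxy.symm] at hlt
  have huS₀ : u ∉ ({q, p, v} : Finset V) := by
    simp only [mem_insert, mem_singleton, not_or]
    refine ⟨?_, ?_, huv.ne⟩
    · rintro rfl
      exact hvp.ne (hu p hpq.symm).symm
    · rintro rfl
      exact hvq' (hu q hpq).symm
  obtain ⟨g, hg, hgf⟩ := hf₀.exists_extend hT hdeg
    (fun x hx => mem_erase.2 ⟨by rintro rfl; exact huS₀ hx, mem_univ x⟩)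
    (by simp) hS₀ hS' (by rw [card_erase_of_mem (mem_univ u), card_univ]; omega)
  have hgv : g v = z := by
    rw [hgf v (by simp)]
    simp [hvp.ne, hvq']
  have hgq : g q = y := by
    rw [hgf q (by simp)]
    simp
  exact hg.isContained_of_insert_leaf hu huv.ne (x := q) (fun h => huS₀ (by simp [h]))
    (hgv ▸ hgq ▸ hzy) (hgv ▸ hgq ▸ hzy') (hgv ▸ hdeg z)

end TreeEmbedding

section Equipartite

variable {V : Type*} [Fintype V] {T : SimpleGraph V}

theorem Connected.not_isContained_compl_completeEquipartiteGraph (hT : T.Connected) {r s : ℕ}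
    (hs : s < Fintype.card V) : ¬ T ⊑ (completeEquipartiteGraph r s)ᶜ := by
  rintro ⟨f⟩
  have hpart : ∀ a b, (f a).1 = (f b).1 := fun a b => by
    obtain ⟨w⟩ := hT a b
    induction w with
    | nil => rfl
    | cons h _ ih =>
      have h' := ((compl_adj _ _ _).1 (f.toHom.map_adj h)).2
      rw [completeEquipartiteGraph_adj, not_not] at h'
      exact h'.trans ih
  have hinj : Function.Injective fun a => (f a).2 :=
    fun a b h => f.injective (Prod.ext (hpart a b) h)
  have := Fintype.card_le_of_injective _ hinj
  rw [Fintype.card_fin] at this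
  omega

end Equipartite

end SimpleGraph

section StarVersusTree

variable {V : Type*} [Fintype V] {T : SimpleGraph V}

theorem ramseyProp2_starGraphK_of_not_dvd (hT : T.IsTree) (hno : ∀ c, ¬ T.IsUniversal c)
    {ℓ N : ℕ} (hN : N + 2 = ℓ + Fintype.card V) (hdvd : ¬ (Fintype.card V - 1) ∣ N) :
    RamseyProp2 N (starGraphK ℓ) T := by
  rw [ramseyProp2_iff]
  intro R
  by_cases hred : ∃ x, ℓ ≤ R.degree x
  · exact .inl (starGraphK_isContained_iff.2 hred)
  simp only [not_exists, not_le] at hred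
  right
  by_cases hR : R.IsCompleteMultipartite
  · refine by_contra fun hblue => hdvd ?_
    have hpart : ∀ x, #(univ.filter (¬ R.Adj x ·)) = Fintype.card V - 1 := fun x => by
      have hlt := hred x
      have hle : #(univ.filter (¬ R.Adj x ·)) < Fintype.card V := not_le.1 fun h =>
        hblue (isContained_of_isClique T (hR.isClique_compl_filter_not_adj x) h)
      rw [card_filter_not_adj, Fintype.card_fin] at hle ⊢
      omega
    simpa using hR.dvd_card hpart
  · obtain ⟨a, z, y, hP⟩ := not_isCompleteMultipartite_iff_exists_isPathGraph3Compl.1 hR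
    obtain ⟨u, v, p, q, huv, hu, hvp, hpq, hvq⟩ := hT.exists_leaf_adj_path hno
    refine hT.isContained_of_le_degree huv hu hvp hpq hvq (fun x => ?_)
      ⟨hP.ne_fst.symm, fun h => hP.not_adj_fst h.symm⟩ ⟨hP.ne_snd, hP.not_adj_snd⟩
      (fun h => h.2 hP.adj) hP.fst_ne_snd
    have := hred x
    rw [degree_compl, Fintype.card_fin]
    omega

theorem not_ramseyProp2_starGraphK (hT : T.Connected) {ℓ t : ℕ}
    (hℓ : t * (Fintype.card V - 1) < ℓ) :
    ¬ RamseyProp2 ((t + 1) * (Fintype.card V - 1)) (starGraphK ℓ) T := by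
  intro h
  rcases h.isContained_or_isContained_compl (by simp)
    (completeEquipartiteGraph (t + 1) (Fintype.card V - 1)) with h₁ | h₂
  · obtain ⟨x, hx⟩ := starGraphK_isContained_iff.1 h₁
    rw [degree_completeEquipartiteGraph, add_tsub_cancel_right] at hx
    omega
  · have := Fintype.card_pos_iff.2 hT.nonempty
    exact hT.not_isContained_compl_completeEquipartiteGraph (by omega) h₂

end StarVersusTree

theorem stmt6 (t n ℓ : ℕ) (hn : 3 ≤ n) (hℓ : ℓ = t * (n - 1) + 2)
    (T : SimpleGraph (Fin n)) (hT : T.IsTree)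
    (hstar : ¬ Nonempty (T ≃g starGraphK (n - 1))) :
    ramsey2 (starGraphK ℓ) T = ℓ + n - 2 := by
  have hno : ∀ c, ¬ T.IsUniversal c := fun c hc => by
    rw [hT.eq_starGraph_of_isUniversal hc] at hstar
    exact hstar (nonempty_iso_starGraphK c)
  obtain ⟨m, rfl⟩ : ∃ m, n = m + 1 := ⟨n - 1, by omega⟩
  simp only [add_tsub_cancel_right] at hℓ ⊢
  have hN : ℓ + (m + 1) - 2 = (t + 1) * m + 1 := by rw [add_one_mul]; omega
  rw [hN]
  refine ramsey2_eq_succ (ramseyProp2_starGraphK_of_not_dvd hT hno ?_ ?_) ?_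
  · simp only [Fintype.card_fin]
    omega
  · simp only [Fintype.card_fin, add_tsub_cancel_right]
    intro hdvd
    have := Nat.le_of_dvd one_pos ((Nat.dvd_add_right (dvd_mul_left m (t + 1))).1 hdvd)
    omega
  · simpa using not_ramseyProp2_starGraphK (ℓ := ℓ) (t := t) hT.connected (by simp; omega)
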